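/- With F as above, for any matrices Z, Z′ one has ‖F(Z) − F(Z′)‖ ≤ ‖G‖‖Δ‖ (1 + ‖Z + Z′‖) ‖Z − Z′‖. -/

import Mathlib

/-!
Write `Q(Z) = Z·𝒟(ΔZ)`, so that `F(Z) − F(Z′) = G ∘ (Q(Z) − Q(Z′) − Δ(Z − Z′))`. Polarizing the
quadratic map `Q` gives `2(Q(Z) − Q(Z′)) = (Z + Z′)·𝒟(Δ(Z − Z′)) + (Z − Z′)·𝒟(Δ(Z + Z′))`, which is
where `‖Z + Z′‖` (rather than `‖Z‖ + ‖Z′‖`) comes from. Since the diagonal entries of a matrix are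
bounded by its spectral norm, `‖𝒟(X)‖ ≤ ‖X‖`, and Schur's inequality `‖A ∘ B‖ ≤ ‖A‖‖B‖` (Cauchy–Schwarz
along the rows of `A`, then the column bounds of `B`) disposes of the Hadamard factor `G`.
-/

open Matrix
open scoped Matrix.Norms.L2Operator

namespace Matrix

variable {𝕜 m n : Type*}

lemma hadamard_sub {α : Type*} [NonUnitalNonAssocRing α] (A B C : Matrix m n α) :
    A ⊙ (B - C) = A ⊙ B - A ⊙ C :=
  ext fun _ _ => mul_sub _ _ _

variable [Fintype m] [Fintype n] [DecidableEq n]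

lemma two_smul_mul_diagonal_diag_sub {R : Type*} [CommRing R]
    (Δ : Matrix n m R) (Z Z' : Matrix m n R) :
    (2 : R) • (Z * diagonal (Δ * Z).diag - Z' * diagonal (Δ * Z').diag) =
      (Z + Z') * diagonal (Δ * (Z - Z')).diag + (Z - Z') * diagonal (Δ * (Z + Z')).diag := by
  ext i j
  simp only [Matrix.mul_add, Matrix.mul_sub, mul_diagonal, diag_apply, smul_apply, add_apply,
    sub_apply, smul_eq_mul]
  ring

variable [RCLike 𝕜]

lemma l2_opNorm_le_of_sum_sq_mulVec_le (A : Matrix m n 𝕜) {c : ℝ} (hc : 0 ≤ c)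
    (h : ∀ x : n → 𝕜, ∑ i, ‖(A *ᵥ x) i‖ ^ 2 ≤ c ^ 2 * ∑ j, ‖x j‖ ^ 2) : ‖A‖ ≤ c := by
  rw [l2_opNorm_def]
  refine ContinuousLinearMap.opNorm_le_bound _ hc fun x => ?_
  refine (sq_le_sq₀ (norm_nonneg _) (by positivity)).mp ?_
  simpa [EuclideanSpace.norm_sq_eq, mul_pow] using h x

lemma sum_norm_sq_col_le (A : Matrix m n 𝕜) (j : n) : ∑ i, ‖A i j‖ ^ 2 ≤ ‖A‖ ^ 2 := by
  have h := A.l2_opNorm_mulVec (EuclideanSpace.single j 1)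
  rw [PiLp.norm_single, norm_one, mul_one,
    ← sq_le_sq₀ (norm_nonneg _) (norm_nonneg _), EuclideanSpace.norm_sq_eq] at h
  simpa [EuclideanSpace.single, mulVec_single] using h

lemma sum_norm_sq_row_le [DecidableEq m] (A : Matrix m n 𝕜) (i : m) :
    ∑ j, ‖A i j‖ ^ 2 ≤ ‖A‖ ^ 2 := by
  simpa [l2_opNorm_conjTranspose] using Aᴴ.sum_norm_sq_col_le i

lemma norm_entry_le (A : Matrix m n 𝕜) (i : m) (j : n) : ‖A i j‖ ≤ ‖A‖ := by
  refine (sq_le_sq₀ (norm_nonneg _) (norm_nonneg _)).mp ?_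
  exact (Finset.single_le_sum (fun i _ => sq_nonneg ‖A i j‖) (Finset.mem_univ i)).trans
    (A.sum_norm_sq_col_le j)

lemma norm_diagonal_diag_le (A : Matrix n n 𝕜) : ‖diagonal A.diag‖ ≤ ‖A‖ := by
  rw [l2_opNorm_diagonal]
  exact pi_norm_le_iff_of_nonneg (norm_nonneg A) |>.mpr fun i => A.norm_entry_le i i

open Finset in
lemma norm_hadamard_le [DecidableEq m] (A B : Matrix m n 𝕜) : ‖A ⊙ B‖ ≤ ‖A‖ * ‖B‖ := by
  refine l2_opNorm_le_of_sum_sq_mulVec_le _ (by positivity) fun x => ?_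
  have entry_bound (i : m) :
      ‖((A ⊙ B) *ᵥ x) i‖ ^ 2 ≤ ‖A‖ ^ 2 * ∑ j, ‖B i j‖ ^ 2 * ‖x j‖ ^ 2 := by
    calc ‖((A ⊙ B) *ᵥ x) i‖ ^ 2 ≤ (∑ j, ‖A i j‖ * (‖B i j‖ * ‖x j‖)) ^ 2 := by
          gcongr
          refine (norm_sum_le _ _).trans_eq (sum_congr rfl fun j _ => ?_)
          simp only [hadamard_apply, norm_mul, mul_assoc]
      _ ≤ (∑ j, ‖A i j‖ ^ 2) * ∑ j, (‖B i j‖ * ‖x j‖) ^ 2 := sum_mul_sq_le_sq_mul_sq _ _ _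
      _ ≤ ‖A‖ ^ 2 * ∑ j, ‖B i j‖ ^ 2 * ‖x j‖ ^ 2 := by
          simp only [mul_pow]
          gcongr
          exact A.sum_norm_sq_row_le i
  calc ∑ i, ‖((A ⊙ B) *ᵥ x) i‖ ^ 2 ≤ ∑ i, ‖A‖ ^ 2 * ∑ j, ‖B i j‖ ^ 2 * ‖x j‖ ^ 2 :=
        sum_le_sum fun i _ => entry_bound i
    _ = ‖A‖ ^ 2 * ∑ j, (∑ i, ‖B i j‖ ^ 2) * ‖x j‖ ^ 2 := by
        simp only [← mul_sum, sum_mul]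
        rw [sum_comm]
    _ ≤ ‖A‖ ^ 2 * ∑ j, ‖B‖ ^ 2 * ‖x j‖ ^ 2 := by
        gcongr with j
        exact B.sum_norm_sq_col_le j
    _ = (‖A‖ * ‖B‖) ^ 2 * ∑ j, ‖x j‖ ^ 2 := by
        rw [← mul_sum, mul_pow, mul_assoc]

lemma norm_mul_diagonal_diag_mul_le [DecidableEq m] (Δ : Matrix n m 𝕜) (Z W : Matrix m n 𝕜) :
    ‖Z * diagonal (Δ * W).diag‖ ≤ ‖Δ‖ * ‖Z‖ * ‖W‖ :=
  calc ‖Z * diagonal (Δ * W).diag‖ ≤ ‖Z‖ * (‖Δ‖ * ‖W‖) :=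
        (l2_opNorm_mul _ _).trans <| by
          gcongr
          exact (norm_diagonal_diag_le _).trans (l2_opNorm_mul _ _)
    _ = ‖Δ‖ * ‖Z‖ * ‖W‖ := by ring

lemma norm_mul_diagonal_diag_sub_le [DecidableEq m] (Δ : Matrix n m 𝕜) (Z Z' : Matrix m n 𝕜) :
    ‖Z * diagonal (Δ * Z).diag - Z' * diagonal (Δ * Z').diag‖ ≤
      ‖Δ‖ * ‖Z + Z'‖ * ‖Z - Z'‖ := by
  have h := congrArg norm (two_smul_mul_diagonal_diag_sub Δ Z Z')
  rw [norm_smul, RCLike.norm_two] at h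
  have := norm_add_le_of_le (norm_mul_diagonal_diag_mul_le Δ (Z + Z') (Z - Z'))
    (norm_mul_diagonal_diag_mul_le Δ (Z - Z') (Z + Z'))
  linarith

end Matrix

/-- `‖F(Z) − F(Z′)‖ ≤ ‖G‖‖Δ‖(1 + ‖Z + Z′‖)‖Z − Z′‖` for the IPT map
`F(Z) = I + G ∘ (Z·𝒟(ΔZ) − ΔZ)` in the spectral norm. -/
theorem IPT_map_lipschitz_estimate {n : ℕ} (G Δ Z Z' : Matrix (Fin n) (Fin n) ℂ) :
    ‖(1 + G ⊙ (Z * Matrix.diagonal (fun i => (Δ * Z) i i) - Δ * Z)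
        : Matrix (Fin n) (Fin n) ℂ) -
      (1 + G ⊙ (Z' * Matrix.diagonal (fun i => (Δ * Z') i i) - Δ * Z'))‖ ≤
      ‖G‖ * ‖Δ‖ * (1 + ‖Z + Z'‖) * ‖Z - Z'‖ := by
  rw [add_sub_add_left_eq_sub, ← hadamard_sub, sub_sub_sub_comm, ← mul_sub]
  calc _ ≤ ‖G‖ * ‖Z * diagonal (Δ * Z).diag - Z' * diagonal (Δ * Z').diag - Δ * (Z - Z')‖ :=
        norm_hadamard_le _ _
    _ ≤ ‖G‖ * (‖Δ‖ * ‖Z + Z'‖ * ‖Z - Z'‖ + ‖Δ‖ * ‖Z - Z'‖) := by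
        gcongr
        exact norm_sub_le_of_le (norm_mul_diagonal_diag_sub_le Δ Z Z') (l2_opNorm_mul _ _)
    _ = ‖G‖ * ‖Δ‖ * (1 + ‖Z + Z'‖) * ‖Z - Z'‖ := by ring
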